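/- For any side information S : {1,…,N} → [0,1] and any predictable sequence (β_t) with β_t ∈ [−1,1], the control variate U_t = S(I_t) − Σ_{i∈N_t} q_t(i) S(i) satisfies E[U_t | F_{t−1}] = 0 almost surely for every t; consequently the control-variate wealth process W̃_t(m*) = Π_{s=1}^t (1 + λ_s(m*)(Z_s + β_s U_s − μ_s(m*))), with predictable (λ_t(m*)) ensuring each factor is nonnegative, is a nonnegative martingale with initial value 1. -/

import Mathlib

/-!
Every random variable in sight has the form `ω ↦ G ω (I_t ω)` with `G` predictable, and the
sampling hypothesis computes its conditional expectation given `F_{t-1}` as the `q_t`-average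
`Σ_{i ∈ N_t} q_t(i) G(·, i)`. The `q_t`-average of `S(i) − Σ q_t S` is `0`, and that of the
importance-weighted `f(i) π(i) / q_t(i)` is the `π f`-mass of the unsampled indices, which is
`μ_t(m*)` because sampling is without replacement. Hence every factor of `W̃` has conditional
mean `1`, and the predictable `W̃_{t-1}` factors out of the conditional expectation.
-/

open MeasureTheory Finset

namespace RLFA

variable {Ω : Type*}

/-- `remaining I t ω` is the set `N_t = {1,…,N} \ {I_1, …, I_{t-1}}` of indices not yet
sampled before time `t`. -/
def remaining {N : ℕ} (I : ℕ → Ω → Fin N) (t : ℕ) (ω : Ω) : Finset (Fin N) :=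
  Finset.univ \ (Finset.Icc 1 (t - 1)).image fun j => I j ω

/-- The filtration `F_t = σ(I_1, …, I_t)`. -/
def filt {N : ℕ} (I : ℕ → Ω → Fin N) (t : ℕ) : MeasurableSpace Ω :=
  ⨆ j ∈ Finset.Icc 1 t, MeasurableSpace.comap (I j) ⊤

/-- The importance-weighted observation `Z_t = f(I_t) · π(I_t) / q_t(I_t)`. -/
noncomputable def Zt {N : ℕ} (π f : Fin N → ℝ) (q : ℕ → Ω → Fin N → ℝ)
    (I : ℕ → Ω → Fin N) (t : ℕ) (ω : Ω) : ℝ :=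
  f (I t ω) * (π (I t ω) / q t ω (I t ω))

/-- `μ_t(m) = m − Σ_{j=1}^{t−1} π(I_j) f(I_j)`. -/
def muT {N : ℕ} (π f : Fin N → ℝ) (I : ℕ → Ω → Fin N) (m : ℝ) (t : ℕ) (ω : Ω) : ℝ :=
  m - ∑ j ∈ Finset.Icc 1 (t - 1), π (I j ω) * f (I j ω)

/-- The control variate `U_t = S(I_t) − Σ_{i ∈ N_t} q_t(i) S(i)`. -/
def Ut {N : ℕ} (S : Fin N → ℝ) (q : ℕ → Ω → Fin N → ℝ) (I : ℕ → Ω → Fin N)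
    (t : ℕ) (ω : Ω) : ℝ :=
  S (I t ω) - ∑ i ∈ remaining I t ω, q t ω i * S i

/-- The control-variate wealth process
`W̃_t(m) = Π_{s=1}^t (1 + λ_s(m)(Z_s + β_s U_s − μ_s(m)))`. -/
noncomputable def wealthCV {N : ℕ} (π f S : Fin N → ℝ) (q : ℕ → Ω → Fin N → ℝ)
    (I : ℕ → Ω → Fin N) (lam β : ℕ → Ω → ℝ) (m : ℝ) (t : ℕ) (ω : Ω) : ℝ :=
  ∏ s ∈ Finset.Icc 1 t,
    (1 + lam s ω * (Zt π f q I s ω + β s ω * Ut S q I s ω - muT π f I m s ω))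

theorem Measurable.eval_countable {α ι γ : Type*} {m : MeasurableSpace α} [MeasurableSpace ι]
    [MeasurableSpace γ] [Countable ι] [MeasurableSingletonClass ι] {h : α → ι} (hh : Measurable h)
    {g : α → ι → γ} (hg : ∀ i, Measurable fun a => g a i) :
    Measurable fun a => g a (h a) :=
  (measurable_from_prod_countable_left (f := fun p : α × ι => g p.1 p.2) hg).comp
    (measurable_id.prodMk hh)

section Sampling

variable {N : ℕ} {I : ℕ → Ω → Fin N}

theorem filt_mono : Monotone (filt I) := fun _ _ hst =>
  biSup_mono fun _ hj => Finset.Icc_subset_Icc_right hst hj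

theorem measurable_filt {j t : ℕ} (hj : j ∈ Finset.Icc 1 t) : Measurable[filt I t] (I j) :=
  measurable_iff_comap_le.2 <|
    le_iSup₂ (f := fun j (_ : j ∈ Finset.Icc 1 t) => MeasurableSpace.comap (I j) ⊤) j hj

theorem measurableSet_mem_remaining (t : ℕ) (i : Fin N) :
    MeasurableSet[filt I (t - 1)] {ω | i ∈ remaining I t ω} := by
  have h : {ω | i ∈ remaining I t ω} = ⋂ j ∈ Finset.Icc 1 (t - 1), {ω | I j ω ≠ i} := by
    ext ω
    simp [remaining, eq_comm]
  rw [h]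
  exact .biInter (Finset.Icc 1 (t - 1)).countable_toSet fun j hj =>
    (measurable_filt hj (measurableSet_singleton i)).compl

theorem measurable_sum_remaining (t : ℕ) {g : Ω → Fin N → ℝ}
    (hg : ∀ i, Measurable[filt I (t - 1)] fun ω => g ω i) :
    Measurable[filt I (t - 1)] fun ω => ∑ i ∈ remaining I t ω, g ω i := by
  have h : (fun ω => ∑ i ∈ remaining I t ω, g ω i)
      = fun ω => ∑ i, {ω | i ∈ remaining I t ω}.indicator (fun ω => g ω i) ω := by
    funext ω
    simp only [Set.indicator_apply, Set.mem_ofPred_eq, Finset.sum_ite_mem, Finset.univ_inter]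
  rw [h]
  exact Finset.measurable_sum _ fun i _ => (hg i).indicator (measurableSet_mem_remaining t i)

theorem measurable_muT (π f : Fin N → ℝ) (m : ℝ) (t : ℕ) :
    Measurable[filt I (t - 1)] (muT π f I m t) :=
  (Finset.measurable_sum _ fun _ hj => (Measurable.of_discrete (f := fun i => π i * f i)).comp
    (measurable_filt hj)).const_sub m

theorem injOn_of_mem_remaining {ω : Ω} {t : ℕ}
    (h : ∀ s ∈ Finset.Icc 1 t, I s ω ∈ remaining I s ω) :
    Set.InjOn (fun j => I j ω) (Finset.Icc 1 t) := by
  suffices ∀ j ∈ Finset.Icc 1 t, ∀ k ∈ Finset.Icc 1 t, j < k → I j ω ≠ I k ω by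
    intro j hj k hk hjk
    by_contra hne
    rcases Nat.lt_or_gt_of_ne hne with hlt | hlt
    exacts [this j hj k hk hlt hjk, this k hk j hj hlt hjk.symm]
  intro j hj k hk hjk heq
  have hj' := Finset.mem_Icc.1 hj
  have := Finset.mem_sdiff.1 (h k hk)
  exact this.2 (Finset.mem_image.2 ⟨j, Finset.mem_Icc.2 ⟨hj'.1, Nat.le_sub_one_of_lt hjk⟩, heq⟩)

theorem sum_remaining_eq {M : Type*} [AddCommGroup M] (w : Fin N → M) {ω : Ω} {t : ℕ}
    (hinj : Set.InjOn (fun j => I j ω) (Finset.Icc 1 (t - 1))) :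
    ∑ i ∈ remaining I t ω, w i = ∑ i, w i - ∑ j ∈ Finset.Icc 1 (t - 1), w (I j ω) := by
  rw [← Finset.sum_image hinj, eq_sub_iff_add_eq]
  exact Finset.sum_sdiff (Finset.subset_univ _)

end Sampling

theorem sum_mul_sub_weightedMean {ι : Type*} (s : Finset ι) (q x : ι → ℝ)
    (hq : ∑ i ∈ s, q i = 1) :
    ∑ i ∈ s, q i * (x i - ∑ j ∈ s, q j * x j) = 0 := by
  simp only [mul_sub, Finset.sum_sub_distrib, ← Finset.sum_mul, hq, one_mul, sub_self]

theorem sum_mul_importanceWeighted {ι : Type*} (s : Finset ι) (q π f : ι → ℝ)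
    (hq : ∀ i ∈ s, q i ≠ 0) :
    ∑ i ∈ s, q i * (f i * (π i / q i)) = ∑ i ∈ s, π i * f i :=
  Finset.sum_congr rfl fun i hi => by field_simp [hq i hi]

/-- `betFactor … t ω i` is the `t`-th factor of the wealth process on the event `I_t = i`. -/
noncomputable def betFactor {N : ℕ} (π f S : Fin N → ℝ) (q : ℕ → Ω → Fin N → ℝ)
    (I : ℕ → Ω → Fin N) (lam β : ℕ → Ω → ℝ) (m : ℝ) (t : ℕ) (ω : Ω) (i : Fin N) : ℝ :=
  1 + lam t ω * (f i * (π i / q t ω i)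
    + β t ω * (S i - ∑ j ∈ remaining I t ω, q t ω j * S j) - muT π f I m t ω)

section Wealth

variable {N : ℕ} {π f S : Fin N → ℝ} {q : ℕ → Ω → Fin N → ℝ} {I : ℕ → Ω → Fin N}
  {lam β : ℕ → Ω → ℝ} {m : ℝ}

theorem wealthCV_zero (ω : Ω) : wealthCV π f S q I lam β m 0 ω = 1 := rfl

theorem wealthCV_succ (t : ℕ) (ω : Ω) :
    wealthCV π f S q I lam β m (t + 1) ω
      = wealthCV π f S q I lam β m t ω * betFactor π f S q I lam β m (t + 1) ω (I (t + 1) ω) :=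
  Finset.prod_Icc_succ_top (Nat.le_add_left 1 t) _

theorem measurable_betFactor {t : ℕ}
    (hq : ∀ i, Measurable[filt I (t - 1)] fun ω => q t ω i)
    (hβ : Measurable[filt I (t - 1)] (β t)) (hlam : Measurable[filt I (t - 1)] (lam t))
    (i : Fin N) :
    Measurable[filt I (t - 1)] fun ω => betFactor π f S q I lam β m t ω i := by
  have hmean := measurable_sum_remaining t fun j => (hq j).mul_const (S j)
  exact measurable_const.add <| hlam.mul <|
    ((((hq i).const_div (π i)).const_mul (f i)).add (hβ.mul (hmean.const_sub (S i)))).sub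
      (measurable_muT π f m t)

theorem measurable_wealthCV {t : ℕ}
    (hq : ∀ s, 1 ≤ s → s ≤ t → ∀ i, Measurable[filt I (s - 1)] fun ω => q s ω i)
    (hβ : ∀ s, 1 ≤ s → s ≤ t → Measurable[filt I (s - 1)] (β s))
    (hlam : ∀ s, 1 ≤ s → s ≤ t → Measurable[filt I (s - 1)] (lam s)) :
    Measurable[filt I t] (wealthCV π f S q I lam β m t) := by
  refine Finset.measurable_prod _ fun s hs => ?_
  obtain ⟨h1, h2⟩ := Finset.mem_Icc.1 hs
  have hst : filt I (s - 1) ≤ filt I t := filt_mono (by omega)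
  exact Measurable.eval_countable (g := betFactor π f S q I lam β m s) (measurable_filt hs)
    fun i => (measurable_betFactor (hq s h1 h2) (hβ s h1 h2) (hlam s h1 h2) i).mono hst le_rfl

theorem sum_mul_betFactor {ω : Ω} {t : ℕ}
    (hq_pos : ∀ i ∈ remaining I t ω, 0 < q t ω i) (hq_sum : ∑ i ∈ remaining I t ω, q t ω i = 1)
    (hinj : Set.InjOn (fun j => I j ω) (Finset.Icc 1 (t - 1))) (hm : m = ∑ i, π i * f i) :
    ∑ i ∈ remaining I t ω, q t ω i * betFactor π f S q I lam β m t ω i = 1 := by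
  have hmean : muT π f I m t ω = ∑ i ∈ remaining I t ω, π i * f i := by
    rw [sum_remaining_eq _ hinj, hm, muT]
  have hZ := sum_mul_importanceWeighted _ _ π f fun i hi => (hq_pos i hi).ne'
  have hU := sum_mul_sub_weightedMean _ _ S hq_sum
  set R := remaining I t ω
  set c := ∑ j ∈ R, q t ω j * S j
  calc ∑ i ∈ R, q t ω i * betFactor π f S q I lam β m t ω i
      = ∑ i ∈ R, (q t ω i + lam t ω * (q t ω i * (f i * (π i / q t ω i)))
          + lam t ω * β t ω * (q t ω i * (S i - c)) - lam t ω * muT π f I m t ω * q t ω i) :=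
        Finset.sum_congr rfl fun i _ => by unfold betFactor; ring
    _ = 1 := by
        simp only [Finset.sum_add_distrib, Finset.sum_sub_distrib, ← Finset.mul_sum, hq_sum, hZ,
          hU, hmean]
        ring

theorem condExp_wealthCV [MeasurableSpace Ω] {μ : Measure Ω} {t : ℕ} (ht : 1 ≤ t)
    (hcond : ∀ G : Ω → Fin N → ℝ, (∀ i, StronglyMeasurable[filt I (t - 1)] fun ω => G ω i) →
      μ[(fun ω => G ω (I t ω)) | filt I (t - 1)]
        =ᵐ[μ] fun ω => ∑ i ∈ remaining I t ω, q t ω i * G ω i)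
    (hW : Measurable[filt I (t - 1)] (wealthCV π f S q I lam β m (t - 1)))
    (hq : ∀ i, Measurable[filt I (t - 1)] fun ω => q t ω i)
    (hβ : Measurable[filt I (t - 1)] (β t)) (hlam : Measurable[filt I (t - 1)] (lam t))
    (hmean : ∀ ω, ∑ i ∈ remaining I t ω, q t ω i * betFactor π f S q I lam β m t ω i = 1) :
    μ[wealthCV π f S q I lam β m t | filt I (t - 1)]
      =ᵐ[μ] wealthCV π f S q I lam β m (t - 1) := by
  obtain ⟨s, rfl⟩ := Nat.exists_eq_add_of_le' ht
  simp only [Nat.add_sub_cancel] at *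
  rw [funext (wealthCV_succ s)]
  refine (hcond
    (fun ω i => wealthCV π f S q I lam β m s ω * betFactor π f S q I lam β m (s + 1) ω i)
    fun i => (hW.mul (measurable_betFactor hq hβ hlam i)).stronglyMeasurable).trans
      (.of_forall fun ω => ?_)
  simp only [mul_left_comm (q (s + 1) ω _), ← Finset.mul_sum, hmean, mul_one]

end Wealth

theorem statement9_general
    [m0 : MeasurableSpace Ω] (μ : Measure Ω)
    {N : ℕ}
    (π f : Fin N → ℝ)
    (I : ℕ → Ω → Fin N)
    (q : ℕ → Ω → Fin N → ℝ)
    (hq_meas : ∀ t, 1 ≤ t → t ≤ N → ∀ i,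
      StronglyMeasurable[filt I (t - 1)] fun ω => q t ω i)
    (hq_pos : ∀ t ω, 1 ≤ t → t ≤ N → ∀ i ∈ remaining I t ω, 0 < q t ω i)
    (hq_sum : ∀ t ω, 1 ≤ t → t ≤ N → ∑ i ∈ remaining I t ω, q t ω i = 1)
    (hWoR : ∀ t ω, 1 ≤ t → t ≤ N → I t ω ∈ remaining I t ω)
    (hcond : ∀ t, 1 ≤ t → t ≤ N → ∀ G : Ω → Fin N → ℝ,
      (∀ i, StronglyMeasurable[filt I (t - 1)] fun ω => G ω i) →
      μ[(fun ω => G ω (I t ω)) | filt I (t - 1)]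
        =ᵐ[μ] fun ω => ∑ i ∈ remaining I t ω, q t ω i * G ω i)
    (mstar : ℝ) (hmstar : mstar = ∑ i, π i * f i)
    -- side information and predictable control-variate weights
    (S : Fin N → ℝ)
    (β : ℕ → Ω → ℝ)
    (hβ_meas : ∀ t, 1 ≤ t → t ≤ N → StronglyMeasurable[filt I (t - 1)] (β t))
    -- predictable betting strategy keeping the factors nonnegative
    (lam : ℕ → Ω → ℝ)
    (hlam_meas : ∀ t, 1 ≤ t → t ≤ N → StronglyMeasurable[filt I (t - 1)] (lam t))
    (hfac : ∀ t, 1 ≤ t → t ≤ N → ∀ᵐ ω ∂μ,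
      0 ≤ 1 + lam t ω * (Zt π f q I t ω + β t ω * Ut S q I t ω - muT π f I mstar t ω)) :
    (∀ t, 1 ≤ t → t ≤ N → μ[Ut S q I t | filt I (t - 1)] =ᵐ[μ] fun _ => 0) ∧
    (∀ ω, wealthCV π f S q I lam β mstar 0 ω = 1) ∧
    (∀ t, t ≤ N → StronglyMeasurable[filt I t] (wealthCV π f S q I lam β mstar t)) ∧
    (∀ t, t ≤ N → ∀ᵐ ω ∂μ, 0 ≤ wealthCV π f S q I lam β mstar t ω) ∧
    (∀ t, 1 ≤ t → t ≤ N →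
      μ[wealthCV π f S q I lam β mstar t | filt I (t - 1)]
        =ᵐ[μ] wealthCV π f S q I lam β mstar (t - 1)) := by
  have hq t h1 h2 i := (hq_meas t h1 h2 i).measurable
  have hβ t h1 h2 := (hβ_meas t h1 h2).measurable
  have hlam t h1 h2 := (hlam_meas t h1 h2).measurable
  have hW t (ht : t ≤ N) : Measurable[filt I t] (wealthCV π f S q I lam β mstar t) :=
    measurable_wealthCV (fun s h1 h2 => hq s h1 (h2.trans ht))
      (fun s h1 h2 => hβ s h1 (h2.trans ht)) (fun s h1 h2 => hlam s h1 (h2.trans ht))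
  refine ⟨fun t h1 h2 => ?_, wealthCV_zero, fun t ht => (hW t ht).stronglyMeasurable,
    fun t ht => ?_, fun t h1 h2 => ?_⟩
  · have hmean := measurable_sum_remaining t fun j => (hq t h1 h2 j).mul_const (S j)
    exact (hcond t h1 h2 _ fun i => (hmean.const_sub (S i)).stronglyMeasurable).trans
      (.of_forall fun ω => sum_mul_sub_weightedMean _ _ S (hq_sum t ω h1 h2))
  · filter_upwards [(Filter.eventually_all_finset (Finset.Icc 1 t)).2 fun s hs =>
      hfac s (Finset.mem_Icc.1 hs).1 ((Finset.mem_Icc.1 hs).2.trans ht)] with ω hω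
    exact Finset.prod_nonneg hω
  · refine condExp_wealthCV h1 (hcond t h1 h2) (hW (t - 1) (by omega)) (hq t h1 h2)
      (hβ t h1 h2) (hlam t h1 h2) fun ω => sum_mul_betFactor (hq_pos t ω h1 h2)
        (hq_sum t ω h1 h2) (injOn_of_mem_remaining fun s hs => ?_) hmstar
    obtain ⟨h1', h2'⟩ := Finset.mem_Icc.1 hs
    exact hWoR s ω h1' (by omega)

/-- For any side information `S : {1,…,N} → [0,1]` and any predictable
sequence `(β_t)` with `β_t ∈ [−1,1]`, the control variate
`U_t = S(I_t) − Σ_{i∈N_t} q_t(i) S(i)` satisfies `E[U_t | F_{t−1}] = 0` almost surely for every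
`t`; consequently the control-variate wealth process
`W̃_t(m*) = Π_{s=1}^t (1 + λ_s(m*)(Z_s + β_s U_s − μ_s(m*)))`, with predictable `(λ_t(m*))`
ensuring each factor is nonnegative, is a nonnegative martingale with initial value `1`. -/
theorem statement9
    [m0 : MeasurableSpace Ω] (μ : Measure Ω) [IsProbabilityMeasure μ]
    {N : ℕ} (hN : 1 ≤ N)
    (π f : Fin N → ℝ)
    (hπ : ∀ i, π i ∈ Set.Ioc (0 : ℝ) 1) (hπsum : ∑ i, π i = 1)
    (hf : ∀ i, f i ∈ Set.Icc (0 : ℝ) 1)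
    (I : ℕ → Ω → Fin N) (hI : ∀ t, Measurable (I t))
    (q : ℕ → Ω → Fin N → ℝ)
    (hq_meas : ∀ t, 1 ≤ t → t ≤ N → ∀ i,
      StronglyMeasurable[filt I (t - 1)] fun ω => q t ω i)
    (hq_pos : ∀ t ω, 1 ≤ t → t ≤ N → ∀ i ∈ remaining I t ω, 0 < q t ω i)
    (hq_sum : ∀ t ω, 1 ≤ t → t ≤ N → ∑ i ∈ remaining I t ω, q t ω i = 1)
    (hWoR : ∀ t ω, 1 ≤ t → t ≤ N → I t ω ∈ remaining I t ω)
    (hcond : ∀ t, 1 ≤ t → t ≤ N → ∀ G : Ω → Fin N → ℝ,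
      (∀ i, StronglyMeasurable[filt I (t - 1)] fun ω => G ω i) →
      μ[(fun ω => G ω (I t ω)) | filt I (t - 1)]
        =ᵐ[μ] fun ω => ∑ i ∈ remaining I t ω, q t ω i * G ω i)
    (mstar : ℝ) (hmstar : mstar = ∑ i, π i * f i)
    -- side information and predictable control-variate weights
    (S : Fin N → ℝ) (hS : ∀ i, S i ∈ Set.Icc (0 : ℝ) 1)
    (β : ℕ → Ω → ℝ)
    (hβ_meas : ∀ t, 1 ≤ t → t ≤ N → StronglyMeasurable[filt I (t - 1)] (β t))
    (hβ_bdd : ∀ t ω, β t ω ∈ Set.Icc (-1 : ℝ) 1)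
    -- predictable betting strategy keeping the factors nonnegative
    (lam : ℕ → Ω → ℝ)
    (hlam_meas : ∀ t, 1 ≤ t → t ≤ N → StronglyMeasurable[filt I (t - 1)] (lam t))
    (hfac : ∀ t, 1 ≤ t → t ≤ N → ∀ᵐ ω ∂μ,
      0 ≤ 1 + lam t ω * (Zt π f q I t ω + β t ω * Ut S q I t ω - muT π f I mstar t ω)) :
    (∀ t, 1 ≤ t → t ≤ N → μ[Ut S q I t | filt I (t - 1)] =ᵐ[μ] fun _ => 0) ∧
    (∀ ω, wealthCV π f S q I lam β mstar 0 ω = 1) ∧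
    (∀ t, t ≤ N → StronglyMeasurable[filt I t] (wealthCV π f S q I lam β mstar t)) ∧
    (∀ t, t ≤ N → ∀ᵐ ω ∂μ, 0 ≤ wealthCV π f S q I lam β mstar t ω) ∧
    (∀ t, 1 ≤ t → t ≤ N →
      μ[wealthCV π f S q I lam β mstar t | filt I (t - 1)]
        =ᵐ[μ] wealthCV π f S q I lam β mstar (t - 1)) :=
  statement9_general (m0 := m0) μ π f I q hq_meas hq_pos hq_sum hWoR hcond mstar hmstar S β hβ_meas
    lam hlam_meas hfac

end RLFA
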